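/- Let f be a power series in ℚ⟦t⟧ with f(0) = 0 and with the coefficient of t in f nonzero. Then f(X)·(X − Y) divides X·f(Y) − Y·f(X) in ℚ⟦X,Y⟧, where f(X) and f(Y) denote the images of f under substitution of the first and second variable respectively. -/

import Mathlib

noncomputable section

open Classical in
/-- Substitution of (multivariate) power series with zero constant terms into a
multivariate power series, defined coefficientwise: the coefficient at `d` only
involves monomials of `f` of total degree at most the weight of `d`, because each
substituted series has zero constant term, so truncating `f` suffices. -/
noncomputable def MvPowerSeries.substZ {σ τ R : Type*} [Fintype σ] [CommRing R]
    (a : σ → MvPowerSeries τ R) (f : MvPowerSeries σ R) : MvPowerSeries τ R :=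
  fun d =>
    MvPowerSeries.coeff d
      (MvPolynomial.aeval a
        (MvPowerSeries.trunc R
          (Finsupp.equivFunOnFinite.symm fun _ => (d.sum fun _ k => k) + 1) f))

/-- Substitution for one-variable power series: `substZ a f = f(a)`. -/
noncomputable def PowerSeries.substZ {R : Type*} [CommRing R] (a : PowerSeries R)
    (f : PowerSeries R) : PowerSeries R :=
  MvPowerSeries.substZ (fun _ : Unit => a) f

/-- A one-dimensional commutative formal group law over `R`: a two-variable power
series `F` with zero constant term such that `F(X,0) = X`, `F(X,Y) = F(Y,X)` and
`F(F(X,Y),Z) = F(X,F(Y,Z))`. -/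
structure IsFormalGroupLaw {R : Type*} [CommRing R] (F : MvPowerSeries (Fin 2) R) : Prop where
  constantCoeff_eq_zero : MvPowerSeries.constantCoeff F = 0
  subst_zero : MvPowerSeries.substZ ![MvPowerSeries.X 0, 0] F = MvPowerSeries.X 0
  comm : MvPowerSeries.substZ ![MvPowerSeries.X 1, MvPowerSeries.X 0] F = F
  assoc :
    MvPowerSeries.substZ
      ![MvPowerSeries.substZ ![MvPowerSeries.X 0, MvPowerSeries.X 1] F,
        (MvPowerSeries.X 2 : MvPowerSeries (Fin 3) R)] F =
    MvPowerSeries.substZ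
      ![(MvPowerSeries.X 0 : MvPowerSeries (Fin 3) R),
        MvPowerSeries.substZ ![MvPowerSeries.X 1, MvPowerSeries.X 2] F] F

/-- `ι` is the formal inverse of the formal group law `F`:
it has zero constant term and `F(X, ι(X)) = 0`. -/
def IsFormalInverse {R : Type*} [CommRing R] (F : MvPowerSeries (Fin 2) R)
    (ι : PowerSeries R) : Prop :=
  PowerSeries.constantCoeff ι = 0 ∧
    MvPowerSeries.substZ ![PowerSeries.X, ι] F = 0

/-- The image of a one-variable power series under substituting the variable
`X i` of `ℚ⟦X,Y⟧`. -/
noncomputable def substVar {R : Type*} [CommRing R] (i : Fin 2) (f : PowerSeries R) :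
    MvPowerSeries (Fin 2) R :=
  MvPowerSeries.substZ (fun _ : Unit => (MvPowerSeries.X i : MvPowerSeries (Fin 2) R)) f


/-! Write `f = t·g`; then `g(0) = f'(0) ≠ 0`, so `g(X)` is a unit and `f(X) = X·g(X)`. Hence
`X·f(Y) - Y·f(X) = X·Y·(g(Y) - g(X))`, and `X - Y` divides `g(X) - g(Y)` with quotient the
divided difference `∑ g_{a+b+1} X^a Y^b`. -/

/-- `f - trunc N f` has order `≥ N`, and substituting a series without constant term does not
lower the order. -/
theorem MvPowerSeries.coeff_aeval_trunc_eq_coeff_subst {τ R : Type*} [CommRing R]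
    {a : MvPowerSeries τ R} (ha : constantCoeff a = 0) (f : PowerSeries R) {e : τ →₀ ℕ}
    {N : Unit →₀ ℕ} (he : e.degree < N ()) :
    coeff e (MvPolynomial.aeval (fun _ => a) (trunc R N f)) = coeff e (f.subst a) := by
  have htail : e.degree < PowerSeries.order ((trunc R N f : MvPowerSeries Unit R) - f) := by
    refine lt_of_lt_of_le (by exact_mod_cast he) (PowerSeries.nat_le_order _ _ fun i hi => ?_)
    have hiN : Finsupp.single () i < N := lt_of_le_of_ne (fun _ => by simpa using hi.le)
      fun h => hi.ne (by simpa using DFunLike.congr_fun h ())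
    rw [PowerSeries.coeff_def Finsupp.single_eq_same, map_sub, MvPolynomial.coeff_coe,
      coeff_trunc, if_pos hiN, sub_self]
  rw [← subst_coe, ← PowerSeries.subst_def, ← sub_eq_zero, ← map_sub,
    ← PowerSeries.subst_sub (.of_constantCoeff_zero ha)]
  exact coeff_of_lt_order (htail.trans_le (PowerSeries.le_order_subst_left ha))

theorem MvPowerSeries.substZ_const_eq_subst {τ R : Type*} [CommRing R]
    {a : MvPowerSeries τ R} (ha : constantCoeff a = 0) (f : PowerSeries R) :
    substZ (fun _ : Unit => a) f = f.subst a := by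
  ext e
  rw [← coeff_aeval_trunc_eq_coeff_subst ha f
    (N := Finsupp.equivFunOnFinite.symm fun _ => (e.sum fun _ k => k) + 1) (lt_add_one _)]
  simp only [substZ, coeff_apply]
  -- the two sides differ only in the decidability instances inside `trunc`
  convert rfl

theorem substVar_eq_subst {R : Type*} [CommRing R] (i : Fin 2) (f : PowerSeries R) :
    substVar i f = f.subst (MvPowerSeries.X i) :=
  MvPowerSeries.substZ_const_eq_subst (MvPowerSeries.constantCoeff_X i) f

theorem PowerSeries.constantCoeff_subst_X {σ R : Type*} [CommRing R] (s : σ)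
    (f : PowerSeries R) :
    MvPowerSeries.constantCoeff (f.subst (MvPowerSeries.X s : MvPowerSeries σ R)) =
      constantCoeff f := by
  classical
  simpa using coeff_subst_single s f 0

theorem MvPowerSeries.coeff_X_mul {σ R : Type*} [CommSemiring R] [DecidableEq σ] (s : σ)
    (φ : MvPowerSeries σ R) (d : σ →₀ ℕ) :
    coeff d (X s * φ) = if d s = 0 then 0 else coeff (d - Finsupp.single s 1) φ := by
  simp only [X, coeff_monomial_mul, one_mul, Finsupp.single_le_iff, Nat.one_le_iff_ne_zero,
    ite_not]

/-- The divided difference `(g(X) - g(Y)) / (X - Y) = ∑ g_{a+b+1} X^a Y^b`. -/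
def PowerSeries.divDiff {R : Type*} [CommRing R] (g : PowerSeries R) :
    MvPowerSeries (Fin 2) R :=
  fun d => coeff (d 0 + d 1 + 1) g

theorem PowerSeries.X_sub_X_mul_divDiff {R : Type*} [CommRing R] (g : PowerSeries R) :
    (MvPowerSeries.X 0 - MvPowerSeries.X 1) * g.divDiff =
      g.subst (MvPowerSeries.X 0 : MvPowerSeries (Fin 2) R) - g.subst (MvPowerSeries.X 1) := by
  ext d
  have h0 : d = Finsupp.single 0 (d 0) ↔ d 1 = 0 := by simp [Finsupp.ext_iff, Fin.forall_fin_two]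
  have h1 : d = Finsupp.single 1 (d 1) ↔ d 0 = 0 := by simp [Finsupp.ext_iff, Fin.forall_fin_two]
  simp only [sub_mul, map_sub, MvPowerSeries.coeff_X_mul, coeff_subst_single, h0, h1]
  simp only [MvPowerSeries.coeff_apply, divDiff, Finsupp.tsub_apply, Finsupp.single_apply]
  split_ifs <;> grind

/-- if `f ∈ ℚ⟦t⟧` has `f(0) = 0` and nonzero coefficient of `t`,
then `f(X)·(X - Y)` divides `X·f(Y) - Y·f(X)` in `ℚ⟦X,Y⟧`. -/
theorem fX_mul_sub_dvd
    (f : PowerSeries ℚ) (h0 : PowerSeries.constantCoeff f = 0)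
    (h1 : PowerSeries.coeff 1 f ≠ 0) :
    substVar 0 f * (MvPowerSeries.X 0 - MvPowerSeries.X 1) ∣
      MvPowerSeries.X 0 * substVar 1 f - MvPowerSeries.X 1 * substVar 0 f := by
  obtain ⟨g, rfl⟩ := PowerSeries.X_dvd_iff.mpr h0
  simp only [substVar_eq_subst, PowerSeries.subst_mul (.X _), PowerSeries.subst_X (.X _)]
  set g₀ : MvPowerSeries (Fin 2) ℚ := g.subst (MvPowerSeries.X 0)
  have hg₀ : g₀ * g₀⁻¹ = 1 :=
    MvPowerSeries.mul_inv_cancel _ (by simpa [g₀, PowerSeries.constantCoeff_subst_X] using h1)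
  refine ⟨-(MvPowerSeries.X 1 * g.divDiff * g₀⁻¹), ?_⟩
  linear_combination (MvPowerSeries.X 0 * MvPowerSeries.X 1) * g.X_sub_X_mul_divDiff +
    (MvPowerSeries.X 0 * MvPowerSeries.X 1 * (MvPowerSeries.X 0 - MvPowerSeries.X 1) * g.divDiff) *
      hg₀
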